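/- arXiv:2307.04001 — 9 statements merged into one kernel-verified Lean document; each statement's English description precedes it below -/
import Mathlib

section
/- For every N ≥ 1 and every C ≥ 0 there exists C' ≥ 0 such that for every z ∈ ℂ^N: if |Σ_{n=1}^N z_n^k| ≤ C for every k ∈ {1,…,N}, then max_{n ∈ {1,…,N}} |z_n| ≤ C'. In other words, the inverse of the sum-of-power mapping maps bounded sets of power sums to bounded multisets of roots. -/
/-!
Newton's identities `k e_k = ± ∑_{i<k} ± e_i p_{k-i}` bound the elementary symmetric functions
inductively, `|e_k| ≤ (C + 1)^k`, once the power sums `p_1, …, p_N` are bounded by `C`. Up to sign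
the `e_k` are the coefficients of the monic polynomial `∏ (X - z_n)`, so Cauchy's bound on its roots
gives `|z_n| < (C + 1)^N + 1`.
-/

open Finset

theorem card_antidiagonal_filter_fst_lt (k : ℕ) : #{a ∈ antidiagonal k | a.1 < k} = k := by
  have : {a ∈ antidiagonal k | a.1 < k} = (antidiagonal k).erase (k, 0) := by
    ext ⟨i, j⟩
    simp only [mem_filter, HasAntidiagonal.mem_antidiagonal, mem_erase, ne_eq, Prod.mk.injEq,
      not_and]
    omega
  simp [this]

theorem mul_esymm_map_univ_eq_sum {σ R : Type*} [Fintype σ] [CommRing R] (z : σ → R) (k : ℕ) :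
    k * (univ.val.map z).esymm k = (-1) ^ (k + 1) *
      ∑ a ∈ antidiagonal k with a.1 < k,
        (-1) ^ a.1 * (univ.val.map z).esymm a.1 * ∑ i, z i ^ a.2 := by
  simpa only [map_mul, map_natCast, map_pow, map_neg, map_one, map_sum,
    MvPolynomial.aeval_esymm_eq_multiset_esymm, MvPolynomial.psum, MvPolynomial.aeval_X] using
    congrArg (MvPolynomial.aeval z) (MvPolynomial.mul_esymm_eq_sum σ R k)

theorem Polynomial.Monic.cauchyBound_le {K : Type*} [NormedDivisionRing K] {p : Polynomial K}
    (hp : p.Monic) {B : ℝ} (hB : 0 ≤ B) (h : ∀ j < p.natDegree, ‖p.coeff j‖ ≤ B) :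
    (p.cauchyBound : ℝ) ≤ B + 1 := by
  rw [Polynomial.cauchyBound, hp.leadingCoeff, nnnorm_one, div_one, NNReal.coe_add, NNReal.coe_one,
    add_le_add_iff_right]
  lift B to NNReal using hB
  exact_mod_cast Finset.sup_le fun j hj => by exact_mod_cast h j (mem_range.mp hj)

theorem norm_esymm_map_univ_le {σ 𝕜 : Type*} [Fintype σ] [RCLike 𝕜] {N : ℕ} {B : ℝ} (hB : 0 ≤ B)
    {z : σ → 𝕜} (hz : ∀ k ∈ Icc 1 N, ‖∑ i, z i ^ k‖ ≤ B) {k : ℕ} (hk : k ≤ N) :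
    ‖(univ.val.map z).esymm k‖ ≤ (B + 1) ^ k := by
  induction k using Nat.strong_induction_on with
  | _ k ih =>
  rcases Nat.eq_zero_or_pos k with rfl | hk0
  · simp [Multiset.esymm]
  have hterm : ∀ a ∈ {a ∈ antidiagonal k | a.1 < k},
      ‖(-1) ^ a.1 * (univ.val.map z).esymm a.1 * ∑ i, z i ^ a.2‖ ≤ (B + 1) ^ (k - 1) * B := by
    intro a ha
    rw [mem_filter, HasAntidiagonal.mem_antidiagonal] at ha
    rw [norm_mul, norm_mul, norm_pow, norm_neg, norm_one, one_pow, one_mul]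
    gcongr
    · exact (ih a.1 ha.2 (by omega)).trans (pow_le_pow_right₀ (by linarith) (by omega))
    · exact hz a.2 (mem_Icc.mpr ⟨by omega, by omega⟩)
  have hmul : (k : ℝ) * ‖(univ.val.map z).esymm k‖ ≤ k * ((B + 1) ^ (k - 1) * B) := calc
    (k : ℝ) * ‖(univ.val.map z).esymm k‖ = ‖(k : 𝕜) * (univ.val.map z).esymm k‖ := by
      rw [norm_mul, RCLike.norm_natCast]
    _ = ‖∑ a ∈ antidiagonal k with a.1 < k,
          (-1) ^ a.1 * (univ.val.map z).esymm a.1 * ∑ i, z i ^ a.2‖ := by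
      rw [mul_esymm_map_univ_eq_sum, norm_mul, norm_pow, norm_neg, norm_one, one_pow, one_mul]
    _ ≤ ∑ a ∈ antidiagonal k with a.1 < k,
          ‖(-1) ^ a.1 * (univ.val.map z).esymm a.1 * ∑ i, z i ^ a.2‖ := norm_sum_le _ _
    _ ≤ ∑ a ∈ antidiagonal k with a.1 < k, (B + 1) ^ (k - 1) * B := sum_le_sum hterm
    _ = k * ((B + 1) ^ (k - 1) * B) := by
      rw [sum_const, card_antidiagonal_filter_fst_lt, nsmul_eq_mul]
  calc ‖(univ.val.map z).esymm k‖ ≤ (B + 1) ^ (k - 1) * B :=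
        le_of_mul_le_mul_left hmul (by exact_mod_cast hk0)
    _ ≤ (B + 1) ^ (k - 1) * (B + 1) := by gcongr; linarith
    _ = (B + 1) ^ k := pow_sub_one_mul hk0.ne' _

open Polynomial in
theorem Multiset.norm_lt_of_norm_esymm_le {K : Type*} [NormedField K] {s : Multiset K} {B : ℝ}
    (hB : 0 ≤ B) (h : ∀ j ∈ Finset.Icc 1 (card s), ‖s.esymm j‖ ≤ B) {w : K} (hw : w ∈ s) :
    ‖w‖ < B + 1 := by
  have hp := monic_multisetProd_X_sub_C s
  have hroot : (s.map fun a => X - C a).prod.IsRoot w := by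
    rw [← mem_roots hp.ne_zero, roots_multiset_prod_X_sub_C]
    exact hw
  calc ‖w‖ < cauchyBound (s.map fun a => X - C a).prod := hroot.norm_lt_cauchyBound hp.ne_zero
    _ ≤ B + 1 := hp.cauchyBound_le hB fun j hj => by
      rw [natDegree_multiset_prod_X_sub_C_eq_card] at hj
      rw [prod_X_sub_C_coeff s hj.le, norm_mul, norm_pow, norm_neg, norm_one, one_pow, one_mul]
      exact h _ (Finset.mem_Icc.mpr ⟨by omega, by omega⟩)

theorem inverse_sum_of_power_bounded_general (N : ℕ) (C : ℝ) (hC : 0 ≤ C) :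
    ∃ C' : ℝ, 0 ≤ C' ∧ ∀ z : Fin N → ℂ,
      (∀ k ∈ Finset.Icc 1 N, ‖∑ n, z n ^ k‖ ≤ C) →
      ∀ n, ‖z n‖ ≤ C' := by
  refine ⟨(C + 1) ^ N + 1, by positivity, fun z hz n => le_of_lt ?_⟩
  refine Multiset.norm_lt_of_norm_esymm_le (by positivity) (fun j hj => ?_)
    (Multiset.mem_map_of_mem z (mem_univ_val n))
  rw [Multiset.card_map, card_val, card_univ, Fintype.card_fin, mem_Icc] at hj
  calc ‖(univ.val.map z).esymm j‖ ≤ (C + 1) ^ j := norm_esymm_map_univ_le hC hz hj.2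
    _ ≤ (C + 1) ^ N := pow_le_pow_right₀ (by linarith) hj.2

/-- The inverse of the complex sum-of-power mapping maps bounded sets of power
sums to bounded multisets of roots: for every `N ≥ 1` and `C ≥ 0` there is a
`C' ≥ 0` such that whenever all the power sums `∑ z_n^k`, `k = 1,…,N`, have
modulus at most `C`, every entry `z_n` has modulus at most `C'`. -/
theorem inverse_sum_of_power_bounded (N : ℕ) (hN : 1 ≤ N) (C : ℝ) (hC : 0 ≤ C) :
    ∃ C' : ℝ, 0 ≤ C' ∧ ∀ z : Fin N → ℂ,
      (∀ k ∈ Finset.Icc 1 N, ‖∑ n, z n ^ k‖ ≤ C) →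
      ∀ n, ‖z n‖ ≤ C' :=
  inverse_sum_of_power_bounded_general N C hC
end

section
/- Let N ≥ 1 and let f : ℝ^N → ℝ be a continuous function that is permutation-invariant, i.e., f(x ∘ σ) = f(x) for every x ∈ ℝ^N and every permutation σ of {1,…,N}. Then there exists a function ρ : ℝ^N → ℝ that is continuous on the range Z = {Ψ_N(x) : x ∈ ℝ^N} of the sum-of-power mapping, such that f(x) = ρ(Ψ_N(x)) for every x ∈ ℝ^N, where Ψ_N(x) = (Σ_{n=1}^N x_n, Σ_{n=1}^N x_n^2, …, Σ_{n=1}^N x_n^N). (DeepSets representation for one-dimensional set features with latent dimension L = N.) -/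
/-!
By Newton's identities the power sums `p₁, …, p_N` of `x ∈ ℝ^N` determine its elementary symmetric
polynomials, hence the polynomial `∏ (X - xᵢ)` and the multiset of entries of `x`. So `Ψ_N x = Ψ_N y`
exactly when `y` is a permutation of `x`, and the invariant `f` factors through `Ψ_N` as a map of
sets. Since `‖x‖_∞ ≤ √p₂(x)` (or `|p₁(x)|` when `N = 1`), `Ψ_N` is proper, hence closed, hence a
quotient map onto its range, which makes the induced `ρ` continuous there.
-/

open Finset Function MvPolynomial Topology

section PowerSums

variable {K ι : Type*} [CommRing K] [IsDomain K] [CharZero K] [Fintype ι] {x y : ι → K}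

theorem MvPolynomial.aeval_esymm_eq_of_sum_pow_eq
    (h : ∀ j ∈ Icc 1 (Fintype.card ι), ∑ i, x i ^ j = ∑ i, y i ^ j) :
    ∀ k ≤ Fintype.card ι, aeval x (esymm ι K k) = aeval y (esymm ι K k) := by
  have aeval_psum (z : ι → K) (j : ℕ) : aeval z (psum ι K j) = ∑ i, z i ^ j := by simp [psum]
  intro k
  induction k using Nat.strong_induction_on with
  | _ k ih =>
    intro hk
    rcases Nat.eq_zero_or_pos k with rfl | hk0
    · simp
    have newton (z : ι → K) := congrArg (aeval z) (mul_esymm_eq_sum ι K k)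
    simp only [map_mul, map_sum, map_pow, map_neg, map_one, map_natCast, aeval_psum] at newton
    refine mul_left_cancel₀ (Nat.cast_ne_zero.mpr hk0.ne')
      ((newton x).trans ?_ |>.trans (newton y).symm)
    refine congrArg _ (sum_congr rfl fun a ha => ?_)
    rw [mem_filter, HasAntidiagonal.mem_antidiagonal] at ha
    rw [ih a.1 ha.2 (by omega), h a.2 (mem_Icc.mpr ⟨by omega, by omega⟩)]

theorem Multiset.map_univ_eq_of_sum_pow_eq
    (h : ∀ j ∈ Finset.Icc 1 (Fintype.card ι), ∑ i, x i ^ j = ∑ i, y i ^ j) :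
    univ.val.map x = univ.val.map y := by
  have hprod : ((univ.val.map x).map fun t => Polynomial.X - Polynomial.C t).prod
      = ((univ.val.map y).map fun t => Polynomial.X - Polynomial.C t).prod := by
    simp only [Multiset.prod_X_sub_X_eq_sum_esymm, Multiset.card_map, card_val, card_univ,
      ← aeval_esymm_eq_multiset_esymm ι K]
    refine sum_congr rfl fun j hj => ?_
    rw [aeval_esymm_eq_of_sum_pow_eq h j (mem_range_succ_iff.mp hj)]
  simpa only [Polynomial.roots_multiset_prod_X_sub_C] using congrArg Polynomial.roots hprod

end PowerSums

theorem Equiv.Perm.exists_comp_eq_of_map_univ_eq {ι α : Type*} [Fintype ι] [DecidableEq α]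
    {x y : ι → α} (h : univ.val.map x = univ.val.map y) : ∃ σ : Perm ι, x ∘ σ = y := by
  have hcard (a : α) : Fintype.card {i // y i = a} = Fintype.card {i // x i = a} := by
    have hcount := congrArg (Multiset.count a) h.symm
    simp only [Multiset.count_map] at hcount
    simpa only [Fintype.card_subtype, card_def, filter_val, @eq_comm _ a] using hcount
  exact ⟨ofFiberEquiv fun a => Fintype.equivOfCardEq (hcard a), funext (ofFiberEquiv_map _)⟩

theorem Topology.IsStrictMap.continuousOn_extend {X Y Z : Type*} [TopologicalSpace X]
    [TopologicalSpace Y] [TopologicalSpace Z] {Ψ : X → Y} (hΨ : IsStrictMap Ψ) {f : X → Z}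
    (hf : Continuous f) (hfΨ : f.FactorsThrough Ψ) (g : Y → Z) :
    ContinuousOn (extend Ψ f g) (Set.range Ψ) := by
  rw [continuousOn_iff_continuous_domRestrict, hΨ.continuous_iff]
  exact hf.congr fun x => (hfΨ.extend_apply g x).symm

section PowerSumMap

variable (K : Type*) [CommRing K] (N : ℕ)

def powerSumMap : (Fin N → K) → Fin N → K := fun x k => ∑ n, x n ^ ((k : ℕ) + 1)

variable {K N}

theorem powerSumMap_eq_powerSumMap_iff [IsDomain K] [CharZero K] {x y : Fin N → K} :
    powerSumMap K N x = powerSumMap K N y ↔ ∃ σ : Equiv.Perm (Fin N), x ∘ σ = y := by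
  classical
  constructor
  · intro h
    refine Equiv.Perm.exists_comp_eq_of_map_univ_eq (Multiset.map_univ_eq_of_sum_pow_eq ?_)
    intro j hj
    rw [Fintype.card_fin, mem_Icc] at hj
    simpa only [powerSumMap, Nat.sub_add_cancel hj.1] using congrFun h ⟨j - 1, by omega⟩
  · rintro ⟨σ, rfl⟩
    funext k
    exact (Equiv.sum_comp σ fun n => x n ^ ((k : ℕ) + 1)).symm

theorem continuous_powerSumMap [TopologicalSpace K] [IsTopologicalRing K] :
    Continuous (powerSumMap K N) :=
  continuous_pi fun _ => continuous_finsetSum _ fun n _ => (continuous_apply n).pow _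

theorem norm_le_max_norm_powerSumMap (x : Fin N → ℝ) :
    ‖x‖ ≤ max ‖powerSumMap ℝ N x‖ √‖powerSumMap ℝ N x‖ := by
  refine (pi_norm_le_iff_of_nonneg (by positivity)).mpr fun i => ?_
  rcases Nat.lt_or_ge N 2 with hN | hN
  · obtain rfl : N = 1 := by have := i.pos; omega
    calc ‖x i‖ = ‖powerSumMap ℝ 1 x 0‖ := by simp [powerSumMap, Subsingleton.elim i 0]
      _ ≤ _ := (norm_le_pi_norm _ 0).trans (le_max_left _ _)
  · have hsq : x i ^ 2 ≤ ‖powerSumMap ℝ N x‖ :=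
      calc x i ^ 2 ≤ ∑ n, x n ^ 2 := single_le_sum (fun n _ => sq_nonneg (x n)) (mem_univ i)
        _ = powerSumMap ℝ N x ⟨1, hN⟩ := rfl
        _ ≤ ‖powerSumMap ℝ N x‖ := (Real.le_norm_self _).trans (norm_le_pi_norm _ _)
    calc ‖x i‖ = √(x i ^ 2) := (Real.sqrt_sq_eq_abs _).symm
      _ ≤ _ := (Real.sqrt_le_sqrt hsq).trans (le_max_right _ _)

theorem isProperMap_powerSumMap : IsProperMap (powerSumMap ℝ N) := by
  refine isProperMap_iff_isCompact_preimage.mpr ⟨continuous_powerSumMap, fun C hC => ?_⟩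
  obtain ⟨R, hR⟩ := hC.isBounded.subset_closedBall 0
  refine Metric.isCompact_of_isClosed_isBounded (hC.isClosed.preimage continuous_powerSumMap)
    (Metric.isBounded_closedBall (x := 0) (r := max R √R) |>.subset fun x hx => ?_)
  have hxR : ‖powerSumMap ℝ N x‖ ≤ R := mem_closedBall_zero_iff.mp (hR hx)
  rw [mem_closedBall_zero_iff]
  exact (norm_le_max_norm_powerSumMap x).trans (max_le_max hxR (Real.sqrt_le_sqrt hxR))

end PowerSumMap

theorem deepsets_one_dimensional_general (N : ℕ)
    (f : (Fin N → ℝ) → ℝ) (hf : Continuous f)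
    (hinv : ∀ (σ : Equiv.Perm (Fin N)) (x : Fin N → ℝ), f (x ∘ σ) = f x) :
    ∃ ρ : (Fin N → ℝ) → ℝ,
      ContinuousOn ρ
        (Set.range (fun x : Fin N → ℝ => fun k : Fin N => ∑ n, x n ^ ((k : ℕ) + 1))) ∧
      ∀ x : Fin N → ℝ, f x = ρ (fun k : Fin N => ∑ n, x n ^ ((k : ℕ) + 1)) := by
  have hfactor : f.FactorsThrough (powerSumMap ℝ N) := fun x y hxy => by
    obtain ⟨σ, rfl⟩ := powerSumMap_eq_powerSumMap_iff.mp hxy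
    exact (hinv σ x).symm
  have hstrict : IsStrictMap (powerSumMap ℝ N) :=
    isProperMap_powerSumMap.isClosedMap.isStrictMap continuous_powerSumMap
  exact ⟨extend (powerSumMap ℝ N) f 0, hstrict.continuousOn_extend hf hfactor 0,
    fun x => (hfactor.extend_apply 0 x).symm⟩

/-- DeepSets representation for one-dimensional set features with latent
dimension `L = N`: every continuous permutation-invariant `f : ℝ^N → ℝ`
factors as `ρ ∘ Ψ_N` where `Ψ_N` is the sum-of-power mapping and `ρ` is
continuous on the range of `Ψ_N`. -/
theorem deepsets_one_dimensional (N : ℕ) (hN : 1 ≤ N)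
    (f : (Fin N → ℝ) → ℝ) (hf : Continuous f)
    (hinv : ∀ (σ : Equiv.Perm (Fin N)) (x : Fin N → ℝ), f (x ∘ σ) = f x) :
    ∃ ρ : (Fin N → ℝ) → ℝ,
      ContinuousOn ρ
        (Set.range (fun x : Fin N → ℝ => fun k : Fin N => ∑ n, x n ^ ((k : ℕ) + 1))) ∧
      ∀ x : Fin N → ℝ, f x = ρ (fun k : Fin N => ∑ n, x n ^ ((k : ℕ) + 1)) :=
  deepsets_one_dimensional_general N f hf hinv
end

section
/- (Union Alignment.) Let X, X' ∈ ℝ^{N×D} with rows x^{(n)}, x'^{(n)} ∈ ℝ^D and columns x_1,…,x_D, x'_1,…,x'_D ∈ ℝ^N. Let a ∈ ℝ^N be an anchor of X and let a' ∈ ℝ^N be arbitrary. Suppose that for every i ∈ {1,…,D} there exists a permutation σ_i of {1,…,N} such that a_n = a'_{σ_i(n)} and (x_i)_n = (x'_i)_{σ_i(n)} for all n ∈ {1,…,N}. Then there exists a single permutation σ of {1,…,N} such that x^{(n)} = x'^{(σ(n))} for all n ∈ {1,…,N}, i.e., X ~ X'. -/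
/-- Union Alignment: if `a` is an anchor of `X` and, for every column `i`,
the pair `(a, x_i)` is aligned with `(a', x'_i)` by some permutation `σ_i`,
then a single permutation aligns all rows of `X` with the rows of `X'`. -/
theorem union_alignment (N D : ℕ) (X X' : Fin N → Fin D → ℝ)
    (a a' : Fin N → ℝ)
    (hanchor : ∀ n m : Fin N, X n ≠ X m → a n ≠ a m)
    (halign : ∀ i : Fin D, ∃ σ : Equiv.Perm (Fin N),
      ∀ n, a n = a' (σ n) ∧ X n i = X' (σ n) i) :
    ∃ σ : Equiv.Perm (Fin N), ∀ n, X n = X' (σ n) := by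
  rcases Nat.eq_zero_or_pos D with hD | hD
  · subst hD
    exact ⟨Equiv.refl _, fun n => funext fun i => i.elim0⟩
  · obtain ⟨i0⟩ := Fin.pos_iff_nonempty.mp hD
    obtain ⟨σ, hσ⟩ := halign i0
    refine ⟨σ, fun n => funext fun i => ?_⟩
    obtain ⟨τ, hτ⟩ := halign i
    set m := τ.symm (σ n) with hm
    have hτm : τ m = σ n := τ.apply_symm_apply _
    have ham : a m = a n := by
      have h1 := (hτ m).1
      have h2 := (hσ n).1
      rw [hτm] at h1
      rw [h1, ← h2]
    have hXm : X m = X n := by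
      by_contra h
      exact hanchor m n h ham
    calc X n i = X m i := by rw [hXm]
      _ = X' (τ m) i := (hτ m).2
      _ = X' (σ n) i := by rw [hτm]
end

section
/- (Anchor Construction.) Let N ≥ 2, D ≥ 1, and K₁ = N(N−1)(D−1)/2 + 1. Let w_1,…,w_{K₁} ∈ ℝ^D be vectors such that every subset of D of them is linearly independent. Then for every matrix X ∈ ℝ^{N×D} there exists j ∈ {1,…,K₁} such that the vector X w_j ∈ ℝ^N (whose n-th entry is the inner product ⟨w_j, x^{(n)}⟩) is an anchor of X. -/
/-!
For a pair of distinct rows `x ≠ y` of `X`, the indices `j` with `⟨w_j, x⟩ = ⟨w_j, y⟩` are those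
with `w_j` in the hyperplane orthogonal to `x - y`. A hyperplane contains at most `D - 1` of the
`w_j`, since any `D` of them span `ℝ^D`. The `N(N-1)/2` pairs of rows thus exclude at most
`N(N-1)(D-1)/2 < K₁` indices, and any remaining index gives an anchor.
-/

open Finset Module Matrix

theorem card_lt_finrank_of_forall_mem_submodule {K V ι : Type*} [DivisionRing K]
    [AddCommGroup V] [Module K V] [FiniteDimensional K V] {w : ι → V}
    (hw : ∀ s : Finset ι, #s = finrank K V → LinearIndependent K fun j : s => w j)
    {W : Submodule K V} (hW : W ≠ ⊤) {s : Finset ι} (hs : ∀ j ∈ s, w j ∈ W) :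
    #s < finrank K V := by
  by_contra! h
  obtain ⟨t, hts, ht⟩ := exists_subset_card_eq h
  have hspan : Submodule.span K (Set.range fun j : t => w j) ≤ W :=
    Submodule.span_le.mpr (by rintro _ ⟨j, rfl⟩; exact hs j (hts j.2))
  have hle : finrank K V ≤ finrank K W :=
    calc finrank K V = finrank K (Submodule.span K (Set.range fun j : t => w j)) := by
          rw [finrank_span_eq_card (hw t ht), Fintype.card_coe, ht]
      _ ≤ finrank K W := Submodule.finrank_mono hspan
  exact hW (Submodule.eq_top_of_finrank_eq (le_antisymm (Submodule.finrank_le W) hle))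

theorem card_lt_of_forall_dotProduct_eq_zero {K n ι : Type*} [Field K] [Fintype n]
    {w : ι → n → K}
    (hw : ∀ s : Finset ι, #s = Fintype.card n → LinearIndependent K fun j : s => w j)
    {v : n → K} (hv : v ≠ 0) {s : Finset ι} (hs : ∀ j ∈ s, w j ⬝ᵥ v = 0) :
    #s < Fintype.card n := by
  classical
  have hker : LinearMap.ker ((dotProductBilin K K).flip v) ≠ ⊤ := by
    obtain ⟨i, hi⟩ := Function.ne_iff.mp hv
    refine fun htop => hi ?_
    simpa using LinearMap.congr_fun (LinearMap.ker_eq_top.mp htop) (Pi.single i 1)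
  simpa using card_lt_finrank_of_forall_mem_submodule (by simpa using hw) hker
    (s := s) (by simpa using hs)

theorem exists_forall_notMem_of_card_mul_lt {α ι : Type*} [Fintype ι] [DecidableEq ι]
    (P : Finset α) (B : α → Finset ι) {k : ℕ} (hB : ∀ p ∈ P, #(B p) ≤ k)
    (hP : #P * k < Fintype.card ι) : ∃ j, ∀ p ∈ P, j ∉ B p := by
  obtain ⟨j, -, hj⟩ := exists_mem_notMem_of_card_lt_card
    ((card_biUnion_le_card_mul P B k hB).trans_lt hP : #(P.biUnion B) < #(univ : Finset ι))
  exact ⟨j, fun p hp hjp => hj (mem_biUnion.mpr ⟨p, hp, hjp⟩)⟩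

theorem anchor_construction_general (N D : ℕ)
    (w : Fin (N * (N - 1) * (D - 1) / 2 + 1) → Fin D → ℝ)
    (hw : ∀ s : Finset (Fin (N * (N - 1) * (D - 1) / 2 + 1)), s.card = D →
      LinearIndependent ℝ (fun j : s => w j)) :
    ∀ X : Fin N → Fin D → ℝ, ∃ j : Fin (N * (N - 1) * (D - 1) / 2 + 1),
      ∀ n m : Fin N, X n ≠ X m → (∑ d, w j d * X n d) ≠ (∑ d, w j d * X m d) := by
  classical
  intro X
  let P : Finset (Fin N × Fin N) := {p | p.1 < p.2}
  let B (p : Fin N × Fin N) : Finset (Fin (N * (N - 1) * (D - 1) / 2 + 1)) :=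
    {j | X p.1 ≠ X p.2 ∧ w j ⬝ᵥ (X p.1 - X p.2) = 0}
  have hB : ∀ p ∈ P, #(B p) ≤ D - 1 := by
    intro p _
    by_cases hp : X p.1 = X p.2
    · simp [B, hp]
    · have := card_lt_of_forall_dotProduct_eq_zero (fun s hs => hw s (by simpa using hs))
        (sub_ne_zero.mpr hp) (s := B p) (by simp [B])
      simp only [Fintype.card_fin] at this
      omega
  have hP : #P * (D - 1) < Fintype.card (Fin (N * (N - 1) * (D - 1) / 2 + 1)) := by
    rw [Fintype.card_product_filter_lt, Fintype.card_fin, Nat.choose_two_right,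
      Nat.div_mul_right_comm (Nat.even_mul_pred_self N).two_dvd, Fintype.card_fin]
    omega
  obtain ⟨j, hj⟩ := exists_forall_notMem_of_card_mul_lt P B hB hP
  refine ⟨j, fun n m hXnm heq => ?_⟩
  have hdot : w j ⬝ᵥ X n = w j ⬝ᵥ X m := heq
  rcases (ne_of_apply_ne X hXnm).lt_or_gt with hnm | hmn
  · exact hj (n, m) (by simp [P, hnm]) (by simp [B, hXnm, hdot])
  · exact hj (m, n) (by simp [P, hmn]) (by simp [B, hXnm.symm, hdot])

/-- Anchor Construction: given `K₁ = N(N−1)(D−1)/2 + 1` vectors in `ℝ^D` such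
that every `D` of them are linearly independent, for every matrix
`X ∈ ℝ^{N×D}` some `X w_j` is an anchor of `X`. -/
theorem anchor_construction (N D : ℕ) (hN : 2 ≤ N) (hD : 1 ≤ D)
    (w : Fin (N * (N - 1) * (D - 1) / 2 + 1) → Fin D → ℝ)
    (hw : ∀ s : Finset (Fin (N * (N - 1) * (D - 1) / 2 + 1)), s.card = D →
      LinearIndependent ℝ (fun j : s => w j)) :
    ∀ X : Fin N → Fin D → ℝ, ∃ j : Fin (N * (N - 1) * (D - 1) / 2 + 1),
      ∀ n m : Fin N, X n ≠ X m → (∑ d, w j d * X n d) ≠ (∑ d, w j d * X m d) :=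
  anchor_construction_general N D w hw
end

section
/- (Lower bound for the LP embedding.) Let N ≥ 2, D ≥ 2, and let 1 ≤ K ≤ D. Then for every choice of vectors w_1,…,w_K ∈ ℝ^D there exist matrices X, X' ∈ ℝ^{N×D} such that for every i ∈ {1,…,K} the vectors X w_i and X' w_i in ℝ^N are equal up to a permutation of their entries, yet there is no single permutation σ of {1,…,N} with x'^{(σ(n))} = x^{(n)} for all n (i.e., X ≁ X'). -/
/-- Lower bound for the LP embedding: if `K ≤ D` (with `N, D ≥ 2`), then no
choice of `K` linear functionals `w_1,…,w_K` makes the channel-wise multiset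
map injective: there exist `X ≁ X'` whose projections `X w_i` and `X' w_i`
agree up to entry permutations for every `i`. -/
theorem lp_lower_bound (N D K : ℕ) (hN : 2 ≤ N) (hD : 2 ≤ D)
    (hK1 : 1 ≤ K) (hKD : K ≤ D) (w : Fin K → Fin D → ℝ) :
    ∃ X X' : Fin N → Fin D → ℝ,
      (∀ i : Fin K, ∃ τ : Equiv.Perm (Fin N),
        ∀ n, (∑ d, w i d * X' (τ n) d) = ∑ d, w i d * X n d) ∧
      ¬ ∃ σ : Equiv.Perm (Fin N), ∀ n, X' (σ n) = X n := by
  set n0 : Fin N := ⟨0, by omega⟩ with hn0def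
  set n1 : Fin N := ⟨1, by omega⟩ with hn1def
  have hn01 : n0 ≠ n1 := by simp [hn0def, hn1def, Fin.ext_iff]
  set W : (Fin D → ℝ) →ₗ[ℝ] (Fin K → ℝ) :=
    { toFun := fun x i => ∑ d, w i d * x d
      map_add' := by
        intro x y; funext i; simp [mul_add, Finset.sum_add_distrib]
      map_smul' := by
        intro c x; funext i; simp [Finset.mul_sum, mul_left_comm] } with hWdef
  have hWapp : ∀ x i, W x i = ∑ d, w i d * x d := fun x i => rfl
  by_cases hinj : Function.Injective W
  · -- W injective, hence K = D and W surjective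
    have hle : D ≤ K := by
      have h := LinearMap.finrank_le_finrank_of_injective hinj
      simpa using h
    have hKeq : K = D := le_antisymm hKD hle
    have hsurj : Function.Surjective W := by
      rw [← LinearMap.injective_iff_surjective_of_finrank_eq_finrank (by simp [hKeq])]
      exact hinj
    have hK2 : 2 ≤ K := by omega
    set k0 : Fin K := ⟨0, by omega⟩ with hk0def
    set k1 : Fin K := ⟨1, by omega⟩ with hk1def
    have hk01 : k0 ≠ k1 := by simp [hk0def, hk1def, Fin.ext_iff]
    obtain ⟨a, ha⟩ := hsurj (Pi.single k0 1)
    obtain ⟨b, hb⟩ := hsurj (Pi.single k1 1)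
    have haI : ∀ i, (∑ d, w i d * a d) = if i = k0 then (1:ℝ) else 0 := by
      intro i
      have := congrFun ha i
      simpa [hWapp, Pi.single_apply] using this
    have hbI : ∀ i, (∑ d, w i d * b d) = if i = k1 then (1:ℝ) else 0 := by
      intro i
      have := congrFun hb i
      simpa [hWapp, Pi.single_apply] using this
    refine ⟨fun n d => if n = n0 then a d + b d else 0,
            fun n d => if n = n0 then a d else if n = n1 then b d else 0, ?_, ?_⟩
    · -- per-channel permutations
      have hX : ∀ (i : Fin K) (n : Fin N),
          (∑ d, w i d * (if n = n0 then a d + b d else 0)) =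
            if n = n0 then ((if i = k0 then (1:ℝ) else 0) + (if i = k1 then 1 else 0))
            else 0 := by
        intro i n
        by_cases h : n = n0
        · simp [h, mul_add, Finset.sum_add_distrib, haI i, hbI i]
        · simp [h]
      have hX' : ∀ (i : Fin K) (m : Fin N),
          (∑ d, w i d * (if m = n0 then a d else if m = n1 then b d else 0)) =
            if m = n0 then (if i = k0 then (1:ℝ) else 0)
            else if m = n1 then (if i = k1 then 1 else 0) else 0 := by
        intro i m
        by_cases h0 : m = n0
        · simp [h0, haI i]
        · by_cases h1 : m = n1
          · simp [h0, h1, hbI i, Ne.symm hn01]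
          · simp [h0, h1]
      intro i
      by_cases hik : i = k1
      · refine ⟨Equiv.swap n0 n1, fun n => ?_⟩
        rw [hX, hX']
        by_cases h0 : n = n0
        · simp [h0, Equiv.swap_apply_left, hn01, Ne.symm hn01, hik, Ne.symm hk01]
        · by_cases h1 : n = n1
          · simp [h0, h1, Equiv.swap_apply_right, Ne.symm hn01, hik, Ne.symm hk01]
          · have : Equiv.swap n0 n1 n = n := Equiv.swap_apply_of_ne_of_ne h0 h1
            simp [this, h0, h1]
      · refine ⟨1, fun n => ?_⟩
        rw [hX, hX']
        simp only [Equiv.Perm.one_apply]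
        by_cases h0 : n = n0
        · simp [h0, hik]
        · by_cases h1 : n = n1
          · simp [h0, h1, hik]
          · simp [h0, h1]
    · -- no global permutation
      rintro ⟨σ, hσ⟩
      have hkey : ∀ i : Fin K,
          (∑ d, w i d * (if σ n0 = n0 then a d else if σ n0 = n1 then b d else 0)) =
            ∑ d, w i d * (if n0 = n0 then a d + b d else 0) := by
        intro i
        have h2 : ∀ d, (if σ n0 = n0 then a d else if σ n0 = n1 then b d else (0:ℝ)) =
            (if n0 = n0 then a d + b d else 0) := fun d => congrFun (hσ n0) d
        exact Finset.sum_congr rfl fun d _ => by rw [h2 d]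
      by_cases h0 : σ n0 = n0
      · have := hkey k1
        simp [h0, haI k1, mul_add, Finset.sum_add_distrib, hbI k1, Ne.symm hk01] at this
      · by_cases h1 : σ n0 = n1
        · have := hkey k0
          simp [h0, h1, hbI k0, mul_add, Finset.sum_add_distrib, haI k0, hk01, Ne.symm hn01] at this
        · have := hkey k0
          simp [h0, h1, mul_add, Finset.sum_add_distrib, haI k0, hbI k0, hk01] at this
  · -- W not injective: kernel vector
    have hker : LinearMap.ker W ≠ ⊥ :=
      fun h => hinj (LinearMap.ker_eq_bot.mp h)
    obtain ⟨v, hvmem, hv0⟩ := Submodule.exists_mem_ne_zero_of_ne_bot hker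
    have hvW : ∀ i, (∑ d, w i d * v d) = 0 := by
      intro i
      have : W v = 0 := hvmem
      simpa [hWapp] using congrFun this i
    refine ⟨fun n d => if n = n0 then v d else 0, fun _ _ => 0, ?_, ?_⟩
    · intro i
      refine ⟨1, fun n => ?_⟩
      by_cases h : n = n0
      · simp [h, hvW i]
      · simp [h]
    · rintro ⟨σ, hσ⟩
      have := congrFun (hσ n0)
      apply hv0
      funext d
      have hd := (this d).symm
      simpa using hd
end

section
/- (Injectivity of the LP sum-pooling.) Let N ≥ 2, D ≥ 1, K₁ = N(N−1)(D−1)/2 + 1, and K₂ = N(N−1) + 1. Let w_1,…,w_{K₁} ∈ ℝ^D be such that every subset of D of them is linearly independent, and let γ_1,…,γ_{K₂} ∈ ℝ be nonzero, pairwise distinct, and such that for all a, b, c, d ∈ {1,…,K₂}, if γ_a ≠ γ_b and γ_a ≠ γ_c then γ_a/γ_b ≠ γ_c/γ_d. Let W ⊆ ℝ^D be the family consisting of: the canonical basis vectors e_1,…,e_D; the vectors w_1,…,w_{K₁}; and the vectors e_i − γ_k w_j for all i ∈ {1,…,D}, j ∈ {1,…,K₁}, k ∈ {1,…,K₂}.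 If X, X' ∈ ℝ^{N×D} satisfy Σ_{n=1}^N ⟨w, x^{(n)}⟩^m = Σ_{n=1}^N ⟨w, x'^{(n)}⟩^m for every w ∈ W and every m ∈ {1,…,N}, then there exists a permutation σ of {1,…,N} with x'^{(σ(n))} = x^{(n)} for all n (i.e., X ~ X'). -/
/-!
Equal power sums of degrees `1, …, N` of `N` numbers give equal elementary symmetric functions
(Newton's identities), hence equal multisets of values. Any `D` of the `w`'s span `ℝ^D`, so a
difference of two distinct rows of `X` is orthogonal to at most `D - 1` of them; with at most
`N(N-1)/2` such pairs, some `w_j` separates all distinct rows of `X`. Matching the anchor values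
`a_n = ⟨w_j, x⁽ⁿ⁾⟩` gives a permutation `σ`. For a coordinate `i`, the direction `e_i - γ_k w_j`
gives a permutation `τ_k` matching the values `x⁽ⁿ⁾_i - γ_k a_n`. If `τ_k` moves an anchor value
at `n`, the ordered pair `(n, τ_k n)` determines `γ_k`; as there are more `γ`'s than ordered
pairs, some `τ_k` preserves all anchor values, and then it matches the `i`-th coordinates too.
-/

open Finset Matrix Module

section PowerSums

variable {ι R : Type*} [Fintype ι] [CommRing R]

theorem exists_perm_of_map_univ_val_eq {β : Type*} {a b : ι → β}
    (h : univ.val.map a = univ.val.map b) : ∃ σ : Equiv.Perm ι, ∀ i, b (σ i) = a i := by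
  classical
  have hfiber : ∀ c, Fintype.card {i // a i = c} = Fintype.card {i // b i = c} := fun c => by
    have hcount := congrArg (Multiset.count c) h
    rw [Multiset.count_map, Multiset.count_map] at hcount
    simpa [Fintype.card_subtype, card_def, filter_val, eq_comm] using hcount
  exact ⟨Equiv.ofFiberEquiv fun c => Fintype.equivOfCardEq (hfiber c), Equiv.ofFiberEquiv_map _⟩

theorem mul_esymm_map_univ_val_eq_sum (f : ι → R) (k : ℕ) :
    k * (univ.val.map f).esymm k = (-1) ^ (k + 1) *
      ∑ p ∈ antidiagonal k with p.1 < k,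
        (-1) ^ p.1 * (univ.val.map f).esymm p.1 * ∑ i, f i ^ p.2 := by
  have := congrArg (MvPolynomial.aeval f) (MvPolynomial.mul_esymm_eq_sum ι R k)
  simpa only [map_mul, map_sum, map_pow, map_neg, map_one, map_natCast, MvPolynomial.psum,
    MvPolynomial.aeval_esymm_eq_multiset_esymm, MvPolynomial.aeval_X] using this

theorem Multiset.eq_of_esymm_eq [IsDomain R] {s t : Multiset R}
    (hcard : Multiset.card s = Multiset.card t)
    (h : ∀ k ≤ Multiset.card s, s.esymm k = t.esymm k) : s = t := by
  open Polynomial in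
  have hprod : (s.map fun r => X - C r).prod = (t.map fun r => X - C r).prod := by
    ext k
    rcases le_or_gt k (Multiset.card s) with hk | hk
    · rw [Multiset.prod_X_sub_C_coeff s hk, Multiset.prod_X_sub_C_coeff t (hcard ▸ hk),
        h _ (Nat.sub_le _ _), hcard]
    · rw [coeff_eq_zero_of_natDegree_lt, coeff_eq_zero_of_natDegree_lt] <;>
        simpa [natDegree_multiset_prod_X_sub_C_eq_card, ← hcard]
  simpa using congrArg Polynomial.roots hprod

variable [IsDomain R] [CharZero R]

theorem esymm_map_univ_val_eq_of_sum_pow_eq {n : ℕ} {a b : ι → R}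
    (h : ∀ m ∈ Icc 1 n, ∑ i, a i ^ m = ∑ i, b i ^ m) {k : ℕ} (hk : k ≤ n) :
    (univ.val.map a).esymm k = (univ.val.map b).esymm k := by
  induction k using Nat.strong_induction_on with
  | _ k ih =>
    rcases k.eq_zero_or_pos with rfl | hk0
    · simp [Multiset.esymm]
    refine mul_left_cancel₀ (Nat.cast_ne_zero.mpr hk0.ne' : (k : R) ≠ 0) ?_
    rw [mul_esymm_map_univ_val_eq_sum, mul_esymm_map_univ_val_eq_sum]
    congr 1
    refine sum_congr rfl fun p hp => ?_
    rw [mem_filter, HasAntidiagonal.mem_antidiagonal] at hp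
    rw [ih p.1 hp.2 (by omega), h p.2 (mem_Icc.mpr ⟨by omega, by omega⟩)]

theorem map_univ_val_eq_of_sum_pow_eq {a b : ι → R}
    (h : ∀ m ∈ Icc 1 (Fintype.card ι), ∑ i, a i ^ m = ∑ i, b i ^ m) :
    univ.val.map a = univ.val.map b :=
  Multiset.eq_of_esymm_eq (by simp) fun _ hk =>
    esymm_map_univ_val_eq_of_sum_pow_eq h (by simpa using hk)

end PowerSums

section GenericDirections

variable {K V ι : Type*} [Field K] [AddCommGroup V] [Module K V] [FiniteDimensional K V]
  {w : ι → V}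

theorem card_lt_finrank_of_forall_apply_eq_zero
    (hw : ∀ s : Finset ι, #s = finrank K V → LinearIndependent K fun j : s => w j)
    {φ : Dual K V} (hφ : φ ≠ 0) {s : Finset ι} (hs : ∀ j ∈ s, φ (w j) = 0) :
    #s < finrank K V := by
  by_contra! hle
  obtain ⟨t, hts, ht⟩ := exists_subset_card_eq hle
  have hspan := (hw t ht).span_eq_top_of_card_eq_finrank' (by simpa using ht)
  exact hφ (LinearMap.ext_on_range hspan fun j => hs j (hts j.2))

theorem exists_forall_apply_ne_zero [Fintype ι]
    (hw : ∀ s : Finset ι, #s = finrank K V → LinearIndependent K fun j : s => w j)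
    {α : Type*} (P : Finset α) (φ : α → Dual K V) (hφ : ∀ p ∈ P, φ p ≠ 0)
    (hcard : #P * (finrank K V - 1) < Fintype.card ι) : ∃ j, ∀ p ∈ P, φ p (w j) ≠ 0 := by
  classical
  have hbad : #(P.biUnion fun p => {j | φ p (w j) = 0}) < #(univ : Finset ι) := by
    refine lt_of_le_of_lt (card_biUnion_le_card_mul _ _ _ fun p hp => ?_) (by simpa using hcard)
    have := card_lt_finrank_of_forall_apply_eq_zero hw (hφ p hp) (s := {j | φ p (w j) = 0})
      fun j hj => (mem_filter.mp hj).2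
    omega
  obtain ⟨j, -, hj⟩ := exists_mem_notMem_of_card_lt_card hbad
  exact ⟨j, fun p hp hzero => hj (mem_biUnion.mpr ⟨p, hp, by simpa using hzero⟩)⟩

end GenericDirections

theorem exists_dotProduct_eq_imp_eq {K ι κ n : Type*} [Field K] [Fintype ι] [LinearOrder ι]
    [Fintype κ] [Fintype n] [DecidableEq n] {w : κ → n → K}
    (hw : ∀ s : Finset κ, #s = Fintype.card n → LinearIndependent K fun j : s => w j)
    (hcard : (Fintype.card ι).choose 2 * (Fintype.card n - 1) < Fintype.card κ)
    (X : ι → n → K) : ∃ j, ∀ a b, w j ⬝ᵥ X a = w j ⬝ᵥ X b → X a = X b := by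
  classical
  let P : Finset (ι × ι) := {p | p.1 < p.2 ∧ X p.1 ≠ X p.2}
  have hP : #P ≤ (Fintype.card ι).choose 2 := by
    rw [← Fintype.card_product_filter_lt]
    exact card_le_card fun p hp => by
      simp only [P, mem_filter] at hp ⊢
      exact ⟨hp.1, hp.2.1⟩
  obtain ⟨j, hj⟩ := exists_forall_apply_ne_zero (K := K) (w := w)
    (by simpa [finrank_fintype_fun_eq_card] using hw) P
    (fun p => dotProductEquiv K n (X p.1 - X p.2))
    (fun p hp => by simpa [P, sub_eq_zero] using (mem_filter.mp hp).2.2)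
    (by rw [finrank_fintype_fun_eq_card]; exact lt_of_le_of_lt (Nat.mul_le_mul_right _ hP) hcard)
  refine ⟨j, fun a b hab => by_contra fun hne => ?_⟩
  have hzero : ∀ c d, w j ⬝ᵥ X c = w j ⬝ᵥ X d → dotProductEquiv K n (X c - X d) (w j) = 0 :=
    fun c d hcd => by simp [dotProduct_comm _ (w j), hcd]
  rcases lt_or_gt_of_ne (ne_of_apply_ne X hne) with hlt | hlt
  · exact hj (a, b) (by simp [P, hlt, hne]) (hzero a b hab)
  · exact hj (b, a) (by simp [P, hlt, Ne.symm hne]) (hzero b a hab.symm)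

theorem eq_of_map_univ_val_sub_mul_eq {ι κ R : Type*} [Fintype ι] [DecidableEq ι] [Fintype κ]
    [CommRing R] [IsDomain R] {a x x' : ι → R} (hx : ∀ n m, a n = a m → x n = x m)
    {γ : κ → R} (hγ : Function.Injective γ)
    (hκ : Fintype.card ι * (Fintype.card ι - 1) < Fintype.card κ)
    (h : ∀ k, univ.val.map (fun n => x n - γ k * a n) =
      univ.val.map (fun n => x' n - γ k * a n)) :
    x' = x := by
  choose τ hτ using fun k => exists_perm_of_map_univ_val_eq (h k)
  obtain ⟨k, hk⟩ : ∃ k, ∀ n, a (τ k n) = a n := by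
    by_contra! hmoved
    choose n hn using hmoved
    obtain ⟨k, -, l, -, hkl, hpair⟩ := exists_ne_map_eq_of_card_lt_of_maps_to
      (s := univ) (t := univ.offDiag) (f := fun k => (n k, τ k (n k)))
      (by simpa [offDiag_card, Nat.mul_sub_one] using hκ)
      fun k _ => mem_offDiag.mpr ⟨mem_univ _, mem_univ _, fun he => hn k (congrArg a he.symm)⟩
    obtain ⟨hn_eq, hτ_eq⟩ := Prod.mk.inj hpair
    have hk := hτ k (n k)
    have hl := hτ l (n l)
    rw [hτ_eq, hn_eq] at hk
    refine hkl (hγ (mul_right_cancel₀ (sub_ne_zero.mpr (hn l)) ?_))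
    linear_combination hl - hk
  funext m
  obtain ⟨n, rfl⟩ := (τ k).surjective m
  have hn := hτ k n
  rw [hk n] at hn
  rw [hx _ _ (hk n)]
  linear_combination hn

theorem lp_injectivity_general (N D : ℕ)
    (w : Fin (N * (N - 1) * (D - 1) / 2 + 1) → Fin D → ℝ)
    (hw : ∀ s : Finset (Fin (N * (N - 1) * (D - 1) / 2 + 1)), s.card = D →
      LinearIndependent ℝ (fun j : s => w j))
    (γ : Fin (N * (N - 1) + 1) → ℝ)
    (hγinj : Function.Injective γ)
    (X X' : Fin N → Fin D → ℝ)
    (h : ∀ v ∈ ({v : Fin D → ℝ | (∃ i, v = Pi.single i 1) ∨ (∃ j, v = w j) ∨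
        (∃ i j k, v = Pi.single i 1 - γ k • w j)} : Set (Fin D → ℝ)),
      ∀ m ∈ Finset.Icc 1 N,
        ∑ n, (∑ d, v d * X n d) ^ m = ∑ n, (∑ d, v d * X' n d) ^ m) :
    ∃ σ : Equiv.Perm (Fin N), ∀ n, X' (σ n) = X n := by
  obtain ⟨j, hj⟩ := exists_dotProduct_eq_imp_eq (fun s hs => hw s (by simpa using hs))
    (by simp [Nat.choose_two_right, Nat.div_mul_right_comm (Nat.even_mul_pred_self N).two_dvd]) X
  obtain ⟨σ, hσ⟩ := exists_perm_of_map_univ_val_eq (map_univ_val_eq_of_sum_pow_eq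
    (a := fun n => w j ⬝ᵥ X n) (b := fun n => w j ⬝ᵥ X' n)
    (by rw [Fintype.card_fin]; exact h _ (Or.inr (Or.inl ⟨j, rfl⟩))))
  refine ⟨σ, fun n => funext fun i => congrFun (eq_of_map_univ_val_sub_mul_eq
    (a := fun n => w j ⬝ᵥ X n) (x := fun n => X n i) (x' := fun n => X' (σ n) i)
    (fun n m hnm => by rw [hj n m hnm]) hγinj (by simp) fun k => ?_) n⟩
  have hk := map_univ_val_eq_of_sum_pow_eq
    (a := fun n => (Pi.single i 1 - γ k • w j) ⬝ᵥ X n)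
    (b := fun n => (Pi.single i 1 - γ k • w j) ⬝ᵥ X' n)
    (by rw [Fintype.card_fin]; exact h _ (Or.inr (Or.inr ⟨i, j, k, rfl⟩)))
  conv_rhs at hk => rw [← Multiset.map_univ_val_equiv σ, Multiset.map_map]
  simpa only [Function.comp_def, sub_dotProduct, single_dotProduct, smul_dotProduct, smul_eq_mul,
    one_mul, hσ] using hk

/-- Injectivity of the LP sum-pooling: with the family `W` consisting of the
canonical basis vectors `e_i`, the anchor-generating weights `w_j` (every `D`
of which are linearly independent), and the coupling vectors `e_i − γ_k w_j`,
equality of all power sums `∑_n ⟨v, x^{(n)}⟩^m` (`v ∈ W`, `1 ≤ m ≤ N`) for `X`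
and `X'` implies `X ~ X'`. -/
theorem lp_injectivity (N D : ℕ) (hN : 2 ≤ N) (hD : 1 ≤ D)
    (w : Fin (N * (N - 1) * (D - 1) / 2 + 1) → Fin D → ℝ)
    (hw : ∀ s : Finset (Fin (N * (N - 1) * (D - 1) / 2 + 1)), s.card = D →
      LinearIndependent ℝ (fun j : s => w j))
    (γ : Fin (N * (N - 1) + 1) → ℝ)
    (hγ0 : ∀ k, γ k ≠ 0)
    (hγinj : Function.Injective γ)
    (hγratio : ∀ a b c d : Fin (N * (N - 1) + 1),
      γ a ≠ γ b → γ a ≠ γ c → γ a / γ b ≠ γ c / γ d)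
    (X X' : Fin N → Fin D → ℝ)
    (h : ∀ v ∈ ({v : Fin D → ℝ | (∃ i, v = Pi.single i 1) ∨ (∃ j, v = w j) ∨
        (∃ i j k, v = Pi.single i 1 - γ k • w j)} : Set (Fin D → ℝ)),
      ∀ m ∈ Finset.Icc 1 N,
        ∑ n, (∑ d, v d * X n d) ^ m = ∑ n, (∑ d, v d * X' n d) ^ m) :
    ∃ σ : Equiv.Perm (Fin N), ∀ n, X' (σ n) = X n :=
  lp_injectivity_general N D w hw γ hγinj X X' h
end

section
/- (Characterization of permutation-equivariant functions.) Let f : ℝ^{N×D} → ℝ^N. For a permutation σ of {1,…,N} and X ∈ ℝ^{N×D}, let σ·X denote the matrix with rows (σ·X)^{(n)} = x^{(σ(n))}. Then f is permutation-equivariant, meaning f(σ·X)_n = f(X)_{σ(n)} for every permutation σ, every X, and every n, if and only if there exists a function τ : ℝ^{N×D} → ℝ that is invariant under all permutations of its last N−1 row arguments, such that for every X ∈ ℝ^{N×D} and every i ∈ {1,…,N}: f(X)_i = τ(x^{(i)}, x^{(i+1)}, …, x^{(N)}, x^{(1)}, …, x^{(i−1)}), where the row arguments after the first are listed in cyclic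 order starting from i+1 (indices taken modulo N). -/
/-- Characterization of permutation-equivariant functions: `f : ℝ^{N×D} → ℝ^N`
is permutation-equivariant iff there is a function `τ` of `N` row arguments,
invariant under all permutations of its last `N−1` arguments, such that the
`i`-th output of `f` is `τ` applied to the rows of `X` listed in cyclic order
starting from row `i`. -/
theorem equivariant_characterization (N D : ℕ) [NeZero N]
    (f : (Fin N → Fin D → ℝ) → (Fin N → ℝ)) :
    (∀ (σ : Equiv.Perm (Fin N)) (X : Fin N → Fin D → ℝ) (n : Fin N),
        f (fun m => X (σ m)) n = f X (σ n)) ↔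
    (∃ τ : (Fin N → Fin D → ℝ) → ℝ,
      (∀ π : Equiv.Perm (Fin N), π 0 = 0 →
        ∀ Z : Fin N → Fin D → ℝ, τ (fun m => Z (π m)) = τ Z) ∧
      (∀ (X : Fin N → Fin D → ℝ) (i : Fin N), f X i = τ (fun m => X (i + m)))) := by
  constructor
  · intro h
    refine ⟨fun Z => f Z 0, ?_, ?_⟩
    · intro π hπ Z
      show f (fun m => Z (π m)) 0 = f Z 0
      rw [h π Z 0, hπ]
    · intro X i
      have := h (Equiv.addLeft i) X 0
      simp only [Equiv.coe_addLeft, add_zero] at this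
      exact this.symm
  · rintro ⟨τ, hinv, hf⟩ σ X n
    set π : Equiv.Perm (Fin N) :=
      (Equiv.addLeft n).trans (σ.trans (Equiv.addLeft (σ n)).symm) with hπdef
    have hπ0 : π 0 = 0 := by
      simp [hπdef, Equiv.addLeft]
    have hπ : ∀ m, σ n + π m = σ (n + m) := by
      intro m
      simp [hπdef, Equiv.addLeft]
    calc f (fun m => X (σ m)) n
        = τ (fun m => X (σ (n + m))) := hf _ n
      _ = τ (fun m => (fun k => X (σ n + k)) (π m)) := by
            congr 1; funext m; simp only []; rw [← hπ m]
      _ = τ (fun k => X (σ n + k)) := hinv π hπ0 (fun k => X (σ n + k))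
      _ = f X (σ n) := (hf X (σ n)).symm
end

section
/- Let N, K ≥ 1 and let V ⊆ ℝ^{NK} be a linear subspace, where vectors in ℝ^{NK} are viewed as K stacked blocks of length N. Let Q = diag(Q_1,…,Q_K) be a block-diagonal matrix with each Q_i ∈ Π(N) an N×N permutation matrix, and for P₀ ∈ Π(N) let I_K ⊗ P₀ denote the block-diagonal matrix with all K diagonal blocks equal to P₀. Say V is uniquely recoverable under Q if whenever x, x' ∈ V satisfy Qx = x', there exists P₀ ∈ Π(N) with (I_K ⊗ P₀)x = x'. Then: if V is uniquely recoverable under Q, there exists P₀ ∈ Π(N) such that Q(V) ∩ V ⊆ {y ∈ ℝ^{NK} : Q(I_K ⊗ P₀)ᵀ y = y}, i.e., the subspace Q(V) ∩ V is contained in the eigenspace of Q(I_K ⊗ P₀)ᵀ corresponding to the eigenvalue 1. -/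
/-- Necessary condition for unique recoverability: vectors in `ℝ^{NK}` are
viewed as `K` stacked blocks of length `N` (functions `Fin K → Fin N → ℝ`).
The block-diagonal permutation `Q = diag(Q_1,…,Q_K)` acts by
`(Qx) k n = x k (q k n)` and `I_K ⊗ P₀` acts by `x k ∘ p`. If the subspace
`V` is uniquely recoverable under `Q`, then there is a permutation `p = P₀`
such that `Q(V) ∩ V` lies in the eigenspace of `Q (I_K ⊗ P₀)ᵀ` for the
eigenvalue `1`, i.e. every `y ∈ Q(V) ∩ V` satisfies
`y k (p⁻¹ (q k n)) = y k n` for all `k, n`. -/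
theorem unique_recoverability_eigenspace (N K : ℕ) (hN : 1 ≤ N) (hK : 1 ≤ K)
    (V : Submodule ℝ (Fin K → Fin N → ℝ))
    (q : Fin K → Equiv.Perm (Fin N))
    (hrec : ∀ x ∈ V, ∀ x' ∈ V, (∀ (k : Fin K) (n : Fin N), x k (q k n) = x' k n) →
      ∃ p : Equiv.Perm (Fin N), ∀ (k : Fin K) (n : Fin N), x k (p n) = x' k n) :
    ∃ p : Equiv.Perm (Fin N), ∀ y : Fin K → Fin N → ℝ,
      (∃ x ∈ V, ∀ (k : Fin K) (n : Fin N), y k n = x k (q k n)) → y ∈ V →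
      ∀ (k : Fin K) (n : Fin N), y k (p⁻¹ (q k n)) = y k n := by
  set M := (Fin K → Fin N → ℝ)
  let Qlin : M →ₗ[ℝ] M :=
    { toFun := fun x k n => x k (q k n)
      map_add' := fun _ _ => rfl
      map_smul' := fun _ _ => rfl }
  set W : Submodule ℝ M := V.map Qlin ⊓ V with hW
  let E : Equiv.Perm (Fin N) → Submodule ℝ ↥W := fun p =>
    { carrier := {y | ∀ (k : Fin K) (n : Fin N), (y : M) k (p⁻¹ (q k n)) = (y : M) k n}
      zero_mem' := fun _ _ => rfl
      add_mem' := by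
        intro a b ha hb k n
        exact congrArg₂ (· + ·) (ha k n) (hb k n)
      smul_mem' := by
        intro c a ha k n
        exact congrArg (c • ·) (ha k n) }
  have hcover : ⋃ p, ((E p : Set ↥W)) = Set.univ := by
    ext y
    simp only [Set.mem_iUnion, Set.mem_univ, iff_true, SetLike.mem_coe]
    obtain ⟨⟨x, hxV, hxy⟩, hyV⟩ := y.2
    obtain ⟨p, hp⟩ := hrec x hxV (y : M) hyV (fun k n => congrFun (congrFun hxy k) n)
    refine ⟨p, fun k n => ?_⟩
    have h1 : (y : M) k (p⁻¹ (q k n)) = x k (q k n) := by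
      rw [← hp k (p⁻¹ (q k n))]
      simp
    rw [h1, ← congrFun (congrFun hxy k) n]
    rfl
  obtain ⟨p, hp⟩ := Subspace.exists_eq_top_of_iUnion_eq_univ hcover
  refine ⟨p, fun y hy1 hy2 k n => ?_⟩
  obtain ⟨x, hxV, hxy⟩ := hy1
  have hyW : y ∈ W := ⟨⟨x, hxV, funext fun k => funext fun n => (hxy k n).symm⟩, hy2⟩
  have : (⟨y, hyW⟩ : ↥W) ∈ E p := by rw [hp]; trivial
  exact this k n
end

section
/- (Main theorem, LE architecture, upper bound.) Let N, D ≥ 1 and let f : ℝ^{N×D} → ℝ be a continuous permutation-invariant function, i.e., f(σ·X) = f(X) for every X ∈ ℝ^{N×D} and every permutation σ of {1,…,N}, where (σ·X)^{(n)} = x^{(σ(n))}. Then there exist a natural number L ≤ N⁴D², vectors v_1,…,v_L ∈ ℝ^D, and a function ρ : ℝ^L → ℝ such that, defining φ : ℝ^D → ℝ^L by φ(x) = (exp(⟨v_1, x⟩), …, exp(⟨v_L, x⟩)) and Φ(X) = Σ_{n=1}^N φ(x^{(n)}), one has f(X) = ρ(Φ(X)) for every X ∈ ℝ^{N×D}, and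 ρ is continuous on the range {Φ(X) : X ∈ ℝ^{N×D}} ⊆ ℝ^L. -/
/-!
Let `m = N(D-1)+1`, let `w_j = (1, j, …, j^(D-1))` for `j < m`, and use the `N·m` weights
`(k+1)·w_j`, `k < N`. Then `Φ(X)` lists the first `N` power sums of the numbers
`exp⟨w_j, x⁽ⁿ⁾⟩`, `n < N`, which by Newton's identities determine the multisets
`{⟨w_j, x⁽ⁿ⁾⟩}ₙ`. Reading `⟨w_j, x⟩` as the value at `j` of a polynomial of degree `< D`, the
elementary symmetric functions of the `N` row polynomials have degree `≤ N(D-1) < m`, so they are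
determined by these multisets; hence `Φ(X)` determines the rows of `X` up to permutation, and `f`
factors as `ρ ∘ Φ`.

For the continuity of `ρ` on the range, `Φ` is proper onto its range: if `Φ(Xᵢ) → Φ(X)`, the
exponentials are bounded by the first power sums, so a subsequence of them converges; the limits are
positive because they have the power sums of `Φ(X)`, and taking logarithms and inverting a
Vandermonde system gives a convergent subsequence of `Xᵢ`.
-/

open Polynomial Matrix Filter Topology

theorem Multiset.eq_of_card_eq_of_esymm_eq {R : Type*} [CommRing R] [IsDomain R]
    {s t : Multiset R} (hcard : card s = card t) (h : ∀ k ≤ card s, s.esymm k = t.esymm k) :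
    s = t := by
  have hprod : (s.map fun a => X - C a).prod = (t.map fun a => X - C a).prod := by
    ext k
    rcases le_or_gt k (card s) with hk | hk
    · rw [Multiset.prod_X_sub_C_coeff s hk, Multiset.prod_X_sub_C_coeff t (hcard ▸ hk), hcard,
        h _ (hcard ▸ Nat.sub_le _ _)]
    · rw [coeff_eq_zero_of_natDegree_lt, coeff_eq_zero_of_natDegree_lt] <;>
        rw [natDegree_multiset_prod_X_sub_C_eq_card] <;> omega
  simpa using congrArg roots hprod

theorem Multiset.esymm_map_ringHom {R S : Type*} [CommSemiring R] [CommSemiring S] (g : R →+* S)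
    (s : Multiset R) (k : ℕ) : (s.map g).esymm k = g (s.esymm k) := by
  simp [Multiset.esymm, Multiset.powersetCard_map, map_multiset_sum, Multiset.prod_hom]

theorem Multiset.natDegree_esymm_le {R : Type*} [CommSemiring R] {s : Multiset R[X]} {B : ℕ}
    (h : ∀ p ∈ s, p.natDegree ≤ B) (k : ℕ) : (s.esymm k).natDegree ≤ k * B := by
  refine Multiset.sum_induction (fun q : R[X] => q.natDegree ≤ k * B) _
    (fun _ _ => natDegree_add_le_of_degree_le) (by simp) ?_
  simp only [Multiset.mem_map, Multiset.mem_powersetCard]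
  rintro _ ⟨t, ⟨hts, rfl⟩, rfl⟩
  calc t.prod.natDegree ≤ (t.map natDegree).sum := natDegree_multiset_prod_le t
    _ ≤ card (t.map natDegree) • B := Multiset.sum_le_card_nsmul _ _ (by
        simpa using fun p hp => h p (Multiset.mem_of_le hts hp))
    _ = card t * B := by simp

theorem Fintype.map_univ_eq_of_sum_pow_eq {ι K : Type*} [Fintype ι] [Field K] [CharZero K]
    {x y : ι → K} (h : ∀ k < Fintype.card ι, ∑ i, x i ^ (k + 1) = ∑ i, y i ^ (k + 1)) :
    Finset.univ.val.map x = Finset.univ.val.map y := by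
  have newton (z : ι → K) (k : ℕ) : (k : K) * (Finset.univ.val.map z).esymm k =
      (-1) ^ (k + 1) * ∑ a ∈ Finset.HasAntidiagonal.antidiagonal k with a.1 < k,
        (-1) ^ a.1 * (Finset.univ.val.map z).esymm a.1 * ∑ i, z i ^ a.2 := by
    have := congrArg (MvPolynomial.aeval z) (MvPolynomial.mul_esymm_eq_sum ι K k)
    simp only [map_mul, map_sum, map_pow, MvPolynomial.aeval_esymm_eq_multiset_esymm] at this
    simpa [MvPolynomial.psum] using this
  refine Multiset.eq_of_card_eq_of_esymm_eq (by simp) fun k hk => ?_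
  simp only [Multiset.card_map, Finset.card_val, Finset.card_univ] at hk
  induction k using Nat.strong_induction_on with
  | _ k ih =>
    rcases Nat.eq_zero_or_pos k with rfl | hk0
    · simp [Multiset.esymm]
    refine mul_left_cancel₀ (Nat.cast_ne_zero.mpr hk0.ne' : (k : K) ≠ 0) ?_
    rw [newton x, newton y]
    congr 1
    refine Finset.sum_congr rfl fun a ha => ?_
    simp only [Finset.mem_filter, Finset.HasAntidiagonal.mem_antidiagonal] at ha
    rw [ih a.1 ha.2 (by omega), show a.2 = a.2 - 1 + 1 by omega, h _ (by omega)]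

theorem Fintype.exists_perm_of_map_univ_eq {ι α : Type*} [Fintype ι]
    {x y : ι → α} (h : Finset.univ.val.map x = Finset.univ.val.map y) :
    ∃ σ : Equiv.Perm ι, ∀ i, x i = y (σ i) := by
  classical
  have hcard : ∀ a, Fintype.card {i // x i = a} = Fintype.card {i // y i = a} := fun a => by
    have := congrArg (Multiset.count a) h
    rw [Multiset.count_map, Multiset.count_map] at this
    simpa [Fintype.card_subtype, Finset.card, Finset.filter_val, eq_comm] using this
  exact ⟨Equiv.ofFiberEquiv fun a => Fintype.equivOfCardEq (hcard a),
    fun i => (Equiv.ofFiberEquiv_map _ i).symm⟩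

theorem Polynomial.natDegree_ofFn_le {R : Type*} [Semiring R] [DecidableEq R] {D : ℕ}
    (x : Fin D → R) : (ofFn D x).natDegree ≤ D - 1 := by
  rcases Nat.eq_zero_or_pos D with rfl | hD
  · simp
  · exact Nat.le_sub_one_of_lt (ofFn_natDegree_lt hD x)

theorem Matrix.rectVandermonde_one_mulVec_apply {R α : Type*} [CommRing R] [DecidableEq R]
    {D : ℕ} (t : α → R) (x : Fin D → R) (a : α) :
    (rectVandermonde t 1 D *ᵥ x) a = (ofFn D x).eval (t a) := by
  simp [Matrix.mulVec, dotProduct, rectVandermonde_apply, ofFn_eq_sum_monomial, eval_finsetSum,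
    mul_comm]

section RectVandermonde

variable {R α ι : Type*} [CommRing R] [IsDomain R] [Fintype α] [Fintype ι] {D : ℕ} {t : α → R}

theorem Matrix.rectVandermonde_one_mulVec_injective (ht : t.Injective)
    (hD : D ≤ Fintype.card α) : (rectVandermonde t 1 D *ᵥ ·).Injective := by
  classical
  intro x y h
  have hdeg (z : Fin D → R) : (ofFn D z).degree < (Finset.univ : Finset α).card :=
    (ofFn_degree_lt z).trans_le (by simpa using hD)
  refine injective_ofFn D <| eq_of_degrees_lt_of_eval_index_eq _ ht.injOn (hdeg x) (hdeg y)
    fun a _ => ?_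
  simpa only [rectVandermonde_one_mulVec_apply] using congrFun h a

theorem Matrix.map_univ_eq_of_map_univ_rectVandermonde_mulVec_eq (ht : t.Injective)
    (hcard : Fintype.card ι * (D - 1) < Fintype.card α) {x y : ι → Fin D → R}
    (h : ∀ a, Finset.univ.val.map (fun i => (rectVandermonde t 1 D *ᵥ x i) a) =
      Finset.univ.val.map (fun i => (rectVandermonde t 1 D *ᵥ y i) a)) :
    Finset.univ.val.map x = Finset.univ.val.map y := by
  classical
  have hdeg (z : ι → Fin D → R) :
      ∀ p ∈ (Finset.univ.val.map z).map (ofFn D), p.natDegree ≤ D - 1 := by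
    simp only [Multiset.mem_map]
    rintro _ ⟨_, _, rfl⟩
    exact natDegree_ofFn_le _
  have heval (z : ι → Fin D → R) (a : α) (k : ℕ) :
      eval (t a) (((Finset.univ.val.map z).map (ofFn D)).esymm k) =
        (Finset.univ.val.map fun i => (rectVandermonde t 1 D *ᵥ z i) a).esymm k := by
    rw [← coe_evalRingHom, ← Multiset.esymm_map_ringHom, Multiset.map_map, Multiset.map_map]
    simp [rectVandermonde_one_mulVec_apply]
  refine Multiset.map_injective (injective_ofFn D) <|
    Multiset.eq_of_card_eq_of_esymm_eq (by simp) fun k hk => ?_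
  refine eq_of_natDegree_lt_card_of_eval_eq _ _ ht (fun a => by rw [heval, heval, h]) ?_
  have := Multiset.natDegree_esymm_le (hdeg x) k
  have := Multiset.natDegree_esymm_le (hdeg y) k
  have : k * (D - 1) ≤ Fintype.card ι * (D - 1) := Nat.mul_le_mul_right _ (by simpa using hk)
  omega

end RectVandermonde

theorem continuousOn_range_of_exists_subseq_tendsto {α β γ : Type*} [TopologicalSpace α]
    [TopologicalSpace β] [FirstCountableTopology β] [T2Space β] [TopologicalSpace γ]
    {Φ : α → β} {ρ : β → γ} {f : α → γ} (hΦ : Continuous Φ) (hf : Continuous f)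
    (hρ : ∀ a, ρ (Φ a) = f a)
    (hsub : ∀ (x : ℕ → α) (a : α), Tendsto (Φ ∘ x) atTop (𝓝 (Φ a)) →
      ∃ b, ∃ φ : ℕ → ℕ, StrictMono φ ∧ Tendsto (x ∘ φ) atTop (𝓝 b)) :
    ContinuousOn ρ (Set.range Φ) := by
  rw [continuousOn_iff_continuous_domRestrict, continuous_iff_seqContinuous]
  intro w y hw
  choose x hx using fun i => (w i).2
  obtain ⟨a, ha⟩ := y.2
  have hΦx : Tendsto (Φ ∘ x) atTop (𝓝 (Φ a)) := by
    simpa [Function.comp_def, hx, ha] using (continuous_subtype_val.tendsto y).comp hw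
  refine tendsto_of_subseq_tendsto fun ns hns => ?_
  obtain ⟨b, φ, hφ, hb⟩ := hsub (x ∘ ns) a (hΦx.comp hns)
  have hΦb : Φ b = Φ a :=
    tendsto_nhds_unique ((hΦ.tendsto b).comp hb) (hΦx.comp (hns.comp hφ.tendsto_atTop))
  refine ⟨φ, ?_⟩
  have hy : ρ y = f b := by rw [← ha, ← hΦb, hρ]
  simpa [Function.comp_def, ← hx, hρ, hy] using (hf.tendsto b).comp hb

namespace DeepSets

abbrev numDirections (N D : ℕ) : ℕ := N * (D - 1) + 1

/-- Row `j` is `(1, j, …, j ^ (D - 1))`: the second vector of `rectVandermonde` is `1`. -/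
noncomputable def momentMatrix (N D : ℕ) : Matrix (Fin (numDirections N D)) (Fin D) ℝ :=
  rectVandermonde (fun j : Fin (numDirections N D) => (j : ℝ)) 1 D

def leWeights (N D : ℕ) : Fin (N * numDirections N D) → Fin D → ℝ := fun l d =>
  ((finProdFinEquiv.symm l).1 + 1 : ℝ) * ((finProdFinEquiv.symm l).2 : ℝ) ^ (d : ℕ)

noncomputable def sumPool {N D L : ℕ} (v : Fin L → Fin D → ℝ) (X : Fin N → Fin D → ℝ) :
    Fin L → ℝ :=
  fun l => ∑ n, Real.exp (∑ d, v l d * X n d)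

noncomputable def expMoments {N D : ℕ} (X : Fin N → Fin D → ℝ) :
    Fin N → Fin (numDirections N D) → ℝ :=
  fun n j => Real.exp ((momentMatrix N D *ᵥ X n) j)

variable {N D : ℕ}

theorem mul_numDirections_le (hD : 1 ≤ D) : N * numDirections N D ≤ N ^ 4 * D ^ 2 := by
  obtain ⟨D, rfl⟩ := Nat.exists_eq_add_of_le' hD
  rcases Nat.eq_zero_or_pos N with rfl | hN
  · simp
  simp only [numDirections, Nat.add_sub_cancel]
  calc N * (N * D + 1) ≤ N ^ 2 * (D + 1) := by nlinarith
    _ ≤ N ^ 4 * (D + 1) ^ 2 :=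
      Nat.mul_le_mul (Nat.pow_le_pow_right hN (by norm_num)) (Nat.le_self_pow two_ne_zero _)

theorem sumPool_leWeights (X : Fin N → Fin D → ℝ) (k : Fin N) (j : Fin (numDirections N D)) :
    sumPool (leWeights N D) X (finProdFinEquiv (k, j)) = ∑ n, expMoments X n j ^ (k + 1 : ℕ) := by
  refine Finset.sum_congr rfl fun n _ => ?_
  rw [expMoments, ← Real.exp_nat_mul, momentMatrix, mulVec, dotProduct, Finset.mul_sum]
  simp [leWeights, rectVandermonde_apply, mul_assoc]

theorem continuous_sumPool {L : ℕ} (v : Fin L → Fin D → ℝ) :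
    Continuous (sumPool (N := N) v) := by
  unfold sumPool
  fun_prop

theorem exists_perm_of_sumPool_eq {X Y : Fin N → Fin D → ℝ}
    (h : sumPool (leWeights N D) X = sumPool (leWeights N D) Y) :
    ∃ σ : Equiv.Perm (Fin N), ∀ n, X n = Y (σ n) := by
  have hcols (j) : Finset.univ.val.map (fun n => (momentMatrix N D *ᵥ X n) j) =
      Finset.univ.val.map (fun n => (momentMatrix N D *ᵥ Y n) j) := by
    refine Multiset.map_injective Real.exp_injective ?_
    simp only [Multiset.map_map]
    refine Fintype.map_univ_eq_of_sum_pow_eq fun k hk => ?_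
    simpa [sumPool_leWeights, expMoments] using
      congrFun h (finProdFinEquiv (⟨k, by simpa using hk⟩, j))
  exact Fintype.exists_perm_of_map_univ_eq <| map_univ_eq_of_map_univ_rectVandermonde_mulVec_eq
    (Nat.cast_injective.comp Fin.val_injective) (by simp [numDirections]) hcols

theorem norm_expMoments_le (X : Fin N → Fin D → ℝ) :
    ‖expMoments X‖ ≤ ‖sumPool (leWeights N D) X‖ := by
  refine (pi_norm_le_iff_of_nonneg (norm_nonneg _)).2 fun n =>
    (pi_norm_le_iff_of_nonneg (norm_nonneg _)).2 fun j => ?_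
  have hnonneg (n') : 0 ≤ expMoments X n' j := (Real.exp_pos _).le
  calc ‖expMoments X n j‖ = expMoments X n j := Real.norm_of_nonneg (hnonneg n)
    _ ≤ ∑ n', expMoments X n' j :=
      Finset.single_le_sum (fun n' _ => hnonneg n') (Finset.mem_univ n)
    _ = sumPool (leWeights N D) X (finProdFinEquiv (⟨0, n.pos⟩, j)) := by
      simp [sumPool_leWeights]
    _ ≤ ‖sumPool (leWeights N D) X‖ := (Real.le_norm_self _).trans (norm_le_pi_norm _ _)

theorem exists_subseq_tendsto_expMoments {X : ℕ → Fin N → Fin D → ℝ} {X₀ : Fin N → Fin D → ℝ}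
    (hX : Tendsto (fun i => sumPool (leWeights N D) (X i)) atTop
      (𝓝 (sumPool (leWeights N D) X₀))) :
    ∃ U : Fin N → Fin (numDirections N D) → ℝ, (∀ n j, 0 < U n j) ∧
      ∃ φ : ℕ → ℕ, StrictMono φ ∧ Tendsto (fun i => expMoments (X (φ i))) atTop (𝓝 U) := by
  obtain ⟨C, hC⟩ := (Metric.isBounded_range_of_tendsto _ hX).exists_norm_le
  obtain ⟨U, -, φ, hφ, hU⟩ := tendsto_subseq_of_bounded (Metric.isBounded_closedBall (x := 0))
    fun i => mem_closedBall_zero_iff.2 ((norm_expMoments_le _).trans (hC _ ⟨i, rfl⟩))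
  have hpow (j) (k : Fin N) :
      ∑ n, U n j ^ (k + 1 : ℕ) = ∑ n, expMoments X₀ n j ^ (k + 1 : ℕ) := by
    have hlim := ((continuous_apply (finProdFinEquiv (k, j))).tendsto _).comp
      (hX.comp hφ.tendsto_atTop)
    simp only [Function.comp_def, sumPool_leWeights] at hlim
    refine tendsto_nhds_unique (tendsto_finsetSum _ fun n _ => ?_) hlim
    exact ((tendsto_pi_nhds.1 (tendsto_pi_nhds.1 hU n) j).pow _)
  refine ⟨U, fun n j => ?_, φ, hφ, hU⟩
  have hcol : Finset.univ.val.map (fun n => U n j) =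
      Finset.univ.val.map (fun n => expMoments X₀ n j) :=
    Fintype.map_univ_eq_of_sum_pow_eq fun k hk => hpow j ⟨k, by simpa using hk⟩
  obtain ⟨n', -, hn'⟩ :=
    Multiset.mem_map.1 (hcol ▸ Multiset.mem_map_of_mem _ (Finset.mem_univ_val n))
  exact hn' ▸ Real.exp_pos _

theorem exists_tendsto_of_tendsto_expMoments (hN : 1 ≤ N) {X : ℕ → Fin N → Fin D → ℝ}
    {U : Fin N → Fin (numDirections N D) → ℝ} (hpos : ∀ n j, 0 < U n j)
    (hU : Tendsto (fun i => expMoments (X i)) atTop (𝓝 U)) :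
    ∃ Y, Tendsto X atTop (𝓝 Y) := by
  have hD : D ≤ Fintype.card (Fin (numDirections N D)) := by
    have := Nat.le_mul_of_pos_left (D - 1) hN
    simp only [Fintype.card_fin, numDirections]
    omega
  obtain ⟨g, hg⟩ := (momentMatrix N D).mulVecLin.exists_leftInverse_of_injective <|
    LinearMap.ker_eq_bot.2 <|
      rectVandermonde_one_mulVec_injective (Nat.cast_injective.comp Fin.val_injective) hD
  have hX (n) : (fun i => X i n) = fun i => g fun j => Real.log (expMoments (X i) n j) := by
    funext i
    simpa [expMoments] using (LinearMap.congr_fun hg (X i n)).symm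
  refine ⟨fun n => g fun j => Real.log (U n j), tendsto_pi_nhds.2 fun n => ?_⟩
  rw [hX]
  exact (g.continuous_of_finiteDimensional.tendsto _).comp <| tendsto_pi_nhds.2 fun j =>
    (tendsto_pi_nhds.1 (tendsto_pi_nhds.1 hU n) j).log (hpos n j).ne'

end DeepSets

open DeepSets

/-- Main theorem (LE architecture, upper bound): every continuous
permutation-invariant `f : ℝ^{N×D} → ℝ` admits a DeepSets representation
`f(X) = ρ(∑_n φ(x^{(n)}))` where `φ(x) = (exp⟨v_1,x⟩, …, exp⟨v_L,x⟩)` is a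
linear + exponential embedding with latent dimension `L ≤ N⁴D²`, and `ρ` is
continuous on the range of the sum-pooling `Φ`. -/
theorem deepsets_LE_upper_bound (N D : ℕ) (hN : 1 ≤ N) (hD : 1 ≤ D)
    (f : (Fin N → Fin D → ℝ) → ℝ) (hf : Continuous f)
    (hinv : ∀ (σ : Equiv.Perm (Fin N)) (X : Fin N → Fin D → ℝ),
      f (fun n => X (σ n)) = f X) :
    ∃ L : ℕ, L ≤ N ^ 4 * D ^ 2 ∧
      ∃ (v : Fin L → Fin D → ℝ) (ρ : (Fin L → ℝ) → ℝ),
        (∀ X : Fin N → Fin D → ℝ,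
          f X = ρ (fun l => ∑ n, Real.exp (∑ d, v l d * X n d))) ∧
        ContinuousOn ρ
          (Set.range (fun X : Fin N → Fin D → ℝ =>
            fun l => ∑ n, Real.exp (∑ d, v l d * X n d))) := by
  have hfactor : f.FactorsThrough (sumPool (leWeights N D)) := fun X Y h => by
    obtain ⟨σ, hσ⟩ := exists_perm_of_sumPool_eq h
    rw [funext hσ, hinv]
  refine ⟨_, mul_numDirections_le hD, leWeights N D, Function.extend (sumPool (leWeights N D)) f 0,
    fun X => (hfactor.extend_apply 0 X).symm, ?_⟩
  refine continuousOn_range_of_exists_subseq_tendsto (continuous_sumPool _) hf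
    (hfactor.extend_apply 0) fun X X₀ hX => ?_
  obtain ⟨U, hpos, φ, hφ, hU⟩ := exists_subseq_tendsto_expMoments hX
  obtain ⟨Y, hY⟩ := exists_tendsto_of_tendsto_expMoments hN hpos hU
  exact ⟨Y, φ, hφ, hY⟩
end
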